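/- (Solid Krein–Milman theorem) Let X be a Banach lattice and A ⊆ X₊ a nonempty, convex, positive-solid subset that is compact in the weak topology. Then A coincides with the norm closure of the smallest convex positive-solid set containing the order extreme points of A. -/

import Mathlib

open Set Metric

variable {X : Type*} [NormedAddCommGroup X] [Lattice X] [HasSolidNorm X] [IsOrderedAddMonoid X]
  [NormedSpace ℝ X] [PosSMulStrictMono ℝ X]
  [CompleteSpace X]

/-- A set is solid if `|x| ≤ |z|` with `z ∈ A` implies `x ∈ A`. -/
def IsSolidSet (A : Set X) : Prop := ∀ ⦃x z : X⦄, z ∈ A → |x| ≤ |z| → x ∈ A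

/-- A subset of the positive cone is positive-solid if `0 ≤ x ≤ z` with `z ∈ A`
implies `x ∈ A`. -/
def IsPosSolidSet (A : Set X) : Prop := ∀ ⦃x z : X⦄, 0 ≤ x → z ∈ A → x ≤ z → x ∈ A

/-- The solid hull of a set: the smallest solid set containing it. -/
def solidHull (C : Set X) : Set X := {z : X | ∃ x ∈ C, |z| ≤ |x|}

/-- The solid convex hull: the smallest convex solid set containing `C`. -/
def solidConvexHull (C : Set X) : Set X :=
  ⋂₀ {D : Set X | C ⊆ D ∧ Convex ℝ D ∧ IsSolidSet D}

/-- The set of order extreme points of `A`. -/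
def orderExtremePoints (A : Set X) : Set X :=
  {a | a ∈ A ∧ ∀ x₀ ∈ A, ∀ x₁ ∈ A, ∀ t : ℝ, 0 < t → t < 1 →
    a ≤ (1 - t) • x₀ + t • x₁ → x₀ = a ∧ x₁ = a}

/-!
Let `B` be the convex positive-solid hull of the order extreme points of `A`. Since `A` is weakly,
hence norm, closed, `closure B ⊆ A`. Conversely, if `a ∈ A \ closure B`, then `a` is not below any
point of `closure B`, which is positive-solid. The lower closure `closure B - X₊` is norm closed
because `closure B` is weakly compact, so Hahn–Banach separates `a` from it by a functional `g`,
positive since the set is downward closed. The face of `A` on which `g` is maximal is closed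
upwards in `A`; a Zorn argument over such weakly compact "upper extreme" subsets, whose minimal
members are singletons because positive functionals separate points, gives an order extreme point
`p` of `A` in that face, whence `g a ≤ g p < g a`.
-/

section OrderedNormedSpace

variable {E : Type*} [NormedAddCommGroup E] [NormedSpace ℝ E] [PartialOrder E]
  [IsOrderedAddMonoid E]

theorem exists_monotone_strongDual_separating {C : Set E} (hconv : Convex ℝ C)
    (hclosed : IsClosed C) (hne : C.Nonempty) (hlower : IsLowerSet C) {x : E} (hx : x ∉ C) :
    ∃ g : StrongDual ℝ E, Monotone g ∧ ∀ y ∈ C, g y < g x := by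
  obtain ⟨g, u, hgC, hux⟩ := geometric_hahn_banach_closed_point hconv hclosed hx
  refine ⟨g, fun y z hyz => ?_, fun y hy => (hgC y hy).trans hux⟩
  obtain ⟨c, hc⟩ := hne
  -- otherwise `g` is unbounded above on the ray `c - n • (z - y)`, which stays in `C`
  by_contra! hzy
  obtain ⟨n, hn⟩ := exists_nat_gt ((u - g c) / (g y - g z))
  have hmem : c - n • (z - y) ∈ C :=
    hlower (sub_le_self _ (nsmul_nonneg (sub_nonneg.2 hyz) n)) hc
  have hlt := hgC _ hmem
  rw [div_lt_iff₀ (sub_pos.2 hzy)] at hn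
  simp only [map_sub, map_nsmul, nsmul_eq_mul] at hlt
  linarith

theorem exists_monotone_strongDual_lt [PosSMulMono ℝ E] [ClosedIicTopology E] {x y : E}
    (h : ¬x ≤ y) : ∃ g : StrongDual ℝ E, Monotone g ∧ g y < g x := by
  obtain ⟨g, hg, hlt⟩ := exists_monotone_strongDual_separating (convex_Iic y) isClosed_Iic
    nonempty_Iic (isLowerSet_Iic y) h
  exact ⟨g, hg, hlt y le_rfl⟩

end OrderedNormedSpace

section UpperExtreme

variable {E : Type*} [AddCommGroup E] [Module ℝ E] [Preorder E] {s t u : Set E}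

structure IsUpperExtreme (s t : Set E) : Prop where
  isExtreme : IsExtreme ℝ s t
  mem_of_le : ∀ ⦃x z : E⦄, x ∈ t → z ∈ s → x ≤ z → z ∈ t

namespace IsUpperExtreme

theorem refl (s : Set E) : IsUpperExtreme s s :=
  ⟨IsExtreme.rfl, fun _ _ _ hz _ => hz⟩

theorem trans (hst : IsUpperExtreme s t) (htu : IsUpperExtreme t u) : IsUpperExtreme s u :=
  ⟨hst.isExtreme.trans htu.isExtreme,
    fun _ _ hx hz hxz => htu.mem_of_le hx (hst.mem_of_le (htu.isExtreme.subset hx) hz hxz) hxz⟩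

theorem sInter {F : Set (Set E)} (hF : F.Nonempty) (h : ∀ t ∈ F, IsUpperExtreme s t) :
    IsUpperExtreme s (⋂₀ F) :=
  ⟨isExtreme_sInter hF fun t ht => (h t ht).isExtreme,
    fun _ _ hx hz hxz => mem_sInter.2 fun t ht => (h t ht).mem_of_le (hx t ht) hz hxz⟩

end IsUpperExtreme

theorem isUpperExtreme_toExposed [TopologicalSpace E] {g : StrongDual ℝ E} (hg : Monotone g)
    (s : Set E) : IsUpperExtreme s (g.toExposed s) :=
  ⟨ContinuousLinearMap.toExposed.isExposed.isExtreme,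
    fun _ _ hx hz hxz => ⟨hz, fun y hy => (hx.2 y hy).trans (hg hxz)⟩⟩

end UpperExtreme

section OrderExtreme

variable {E : Type*} [NormedAddCommGroup E] [Lattice E] [NormedSpace ℝ E] {s t : Set E}

theorem mem_orderExtremePoints_singleton (p : E) : p ∈ orderExtremePoints {p} :=
  ⟨rfl, fun _ h₀ _ h₁ _ _ _ _ => ⟨h₀, h₁⟩⟩

theorem IsUpperExtreme.orderExtremePoints_subset (hs : Convex ℝ s) (h : IsUpperExtreme s t) :
    orderExtremePoints t ⊆ orderExtremePoints s := by
  rintro p ⟨hpt, hp⟩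
  refine ⟨h.isExtreme.subset hpt, fun x₀ hx₀ x₁ hx₁ τ hτ₀ hτ₁ hle => ?_⟩
  have hmem : (1 - τ) • x₀ + τ • x₁ ∈ t :=
    h.mem_of_le hpt (hs hx₀ hx₁ (by linarith) hτ₀.le (by ring)) hle
  have hseg : (1 - τ) • x₀ + τ • x₁ ∈ openSegment ℝ x₀ x₁ :=
    ⟨1 - τ, τ, by linarith, hτ₀, by ring, rfl⟩
  exact hp x₀ (h.isExtreme.left_mem_of_mem_openSegment hx₀ hx₁ hmem hseg)
    x₁ (h.isExtreme.right_mem_of_mem_openSegment hx₀ hx₁ hmem hseg) τ hτ₀ hτ₁ hle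

end OrderExtreme

section WeakTopology

variable {E : Type*} [NormedAddCommGroup E] [NormedSpace ℝ E] {s t : Set E}

theorem WeakSpace.isClosed_of_isClosed (hs : IsClosed (toWeakSpace ℝ E '' s)) : IsClosed s := by
  convert hs.preimage (toWeakSpaceCLM ℝ E).continuous
  exact (preimage_image_eq _ (toWeakSpace ℝ E).injective).symm

theorem IsClosed.toWeakSpace_image (hs : IsClosed s) (hconv : Convex ℝ s) :
    IsClosed (toWeakSpace ℝ E '' s) := by
  rw [← hs.closure_eq, hconv.toWeakSpace_closure ℝ]
  exact isClosed_closure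

theorem StrongDual.continuous_comp_toWeakSpace_symm (g : StrongDual ℝ E) :
    Continuous fun v => g ((toWeakSpace ℝ E).symm v) :=
  WeakBilin.eval_continuous _ g

theorem IsClosed.toWeakSpace_image_toExposed (g : StrongDual ℝ E)
    (ht : IsClosed (toWeakSpace ℝ E '' t)) : IsClosed (toWeakSpace ℝ E '' g.toExposed t) := by
  rw [LinearEquiv.image_eq_preimage_symm] at ht ⊢
  have hsep : (toWeakSpace ℝ E).symm ⁻¹' g.toExposed t = (toWeakSpace ℝ E).symm ⁻¹' t ∩
      ⋂ y ∈ t, {v | g y ≤ g ((toWeakSpace ℝ E).symm v)} := by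
    ext v
    simp [ContinuousLinearMap.toExposed]
  rw [hsep]
  exact ht.inter <| isClosed_biInter fun y _ =>
    isClosed_Ici.preimage g.continuous_comp_toWeakSpace_symm

theorem IsCompact.toExposed_nonempty (ht : IsCompact (toWeakSpace ℝ E '' t)) (hne : t.Nonempty)
    (g : StrongDual ℝ E) : (g.toExposed t).Nonempty := by
  obtain ⟨_, ⟨x, hx, rfl⟩, hmax⟩ :=
    ht.exists_isMaxOn (hne.image _) g.continuous_comp_toWeakSpace_symm.continuousOn
  exact ⟨x, hx, fun y hy => by simpa using hmax (mem_image_of_mem _ hy)⟩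

end WeakTopology

section LowerClosure

open Pointwise

variable {E : Type*} [AddCommGroup E] [PartialOrder E] [IsOrderedAddMonoid E]

theorem coe_lowerClosure_eq_add_Iic_zero (K : Set E) : (lowerClosure K : Set E) = K + Iic 0 := by
  have h := add_lowerClosure K 0
  rwa [add_zero, lowerClosure_zero, ← LowerSet.Iic_zero, LowerSet.coe_Iic, eq_comm] at h

theorem Convex.lowerClosure [Module ℝ E] [PosSMulMono ℝ E] {K : Set E} (hK : Convex ℝ K) :
    Convex ℝ (lowerClosure K : Set E) := by
  rw [coe_lowerClosure_eq_add_Iic_zero]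
  exact hK.add (convex_Iic 0)

theorem IsCompact.isClosed_lowerClosure_of_toWeakSpace_image {E : Type*} [NormedAddCommGroup E]
    [NormedSpace ℝ E] [PartialOrder E] [IsOrderedAddMonoid E] [PosSMulMono ℝ E]
    [ClosedIicTopology E] {K : Set E} (hK : IsCompact (toWeakSpace ℝ E '' K)) :
    IsClosed (lowerClosure K : Set E) := by
  apply WeakSpace.isClosed_of_isClosed
  rw [coe_lowerClosure_eq_add_Iic_zero, image_add]
  exact (isClosed_Iic.toWeakSpace_image (convex_Iic 0)).add_left_of_isCompact hK

end LowerClosure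

theorem exists_isUpperExtreme_singleton {E : Type*} [NormedAddCommGroup E] [NormedSpace ℝ E]
    [PartialOrder E] [IsOrderedAddMonoid E] [PosSMulMono ℝ E] [ClosedIicTopology E] {s : Set E}
    (hs : IsCompact (toWeakSpace ℝ E '' s)) (hne : s.Nonempty) : ∃ p, IsUpperExtreme s {p} := by
  let S : Set (Set E) := {t | t.Nonempty ∧ IsClosed (toWeakSpace ℝ E '' t) ∧ IsUpperExtreme s t}
  have hcompact : ∀ t ∈ S, IsCompact (toWeakSpace ℝ E '' t) := fun t ht =>
    hs.of_isClosed_subset ht.2.1 (image_mono ht.2.2.isExtreme.subset)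
  obtain ⟨t, ht⟩ : ∃ t, Minimal (· ∈ S) t := by
    refine zorn_superset _ fun F hFS hF => ?_
    obtain rfl | hFne := F.eq_empty_or_nonempty
    · exact ⟨s, ⟨hne, hs.isClosed, .refl s⟩, fun _ => False.elim⟩
    have himage : toWeakSpace ℝ E '' ⋂₀ F = ⋂ t : F, toWeakSpace ℝ E '' t := by
      simp only [LinearEquiv.image_eq_preimage_symm, preimage_sInter, biInter_eq_iInter]
    have : Nonempty F := hFne.to_subtype
    refine ⟨⋂₀ F, ⟨?_, ?_, .sInter hFne fun t ht => (hFS ht).2.2⟩,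
      fun t ht => sInter_subset_of_mem ht⟩
    · rw [← image_nonempty, himage]
      refine IsCompact.nonempty_iInter_of_directed_nonempty_isCompact_isClosed _
        (fun t u => ?_) (fun t => (hFS t.2).1.image _) (fun t => hcompact t (hFS t.2))
        fun t => (hFS t.2).2.1
      obtain htu | hut := hF.total t.2 u.2
      exacts [⟨t, Subset.rfl, image_mono htu⟩, ⟨u, image_mono hut, Subset.rfl⟩]
    · rw [himage]
      exact isClosed_iInter fun t => (hFS t.2).2.1
  obtain ⟨⟨x, hxt⟩, htclosed, hst⟩ := ht.prop
  -- by minimality `t` lies in the face exposed by any positive `g`, so `g` is constant on `t`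
  have hle : ∀ y ∈ t, ∀ z ∈ t, y ≤ z := by
    intro y hy z hz
    by_contra hyz
    obtain ⟨g, hg, hgzy⟩ := exists_monotone_strongDual_lt hyz
    have hexposed : g.toExposed t ∈ S :=
      ⟨(hcompact t ht.prop).toExposed_nonempty ⟨x, hxt⟩ g,
        htclosed.toWeakSpace_image_toExposed g, hst.trans (isUpperExtreme_toExposed hg t)⟩
    rw [ht.eq_of_ge hexposed (sep_subset _ _)] at hz
    exact hgzy.not_ge (hz.2 y hy)
  refine ⟨x, ?_⟩
  rwa [← eq_singleton_iff_unique_mem.2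
    ⟨hxt, fun y hy => le_antisymm (hle y hy x hxt) (hle x hxt y hy)⟩]

section PosSolid

variable {E : Type*} [NormedAddCommGroup E] [Lattice E]

theorem isPosSolidSet_sInter {S : Set (Set E)} (h : ∀ D ∈ S, IsPosSolidSet D) :
    IsPosSolidSet (⋂₀ S) :=
  fun _ _ hx hz hxz => mem_sInter.2 fun D hD => h D hD hx (hz D hD) hxz

theorem IsPosSolidSet.closure [TopologicalLattice E] {s : Set E} (hs : IsPosSolidSet s)
    (hpos : s ⊆ {x | 0 ≤ x}) : IsPosSolidSet (closure s) := by
  intro x z hx hz hxz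
  have h := map_mem_closure (continuous_const.inf continuous_id) hz
    fun y hy => hs (le_inf hx (hpos hy)) hy (inf_le_right : x ⊓ y ≤ y)
  rwa [id, inf_eq_left.2 hxz] at h

end PosSolid

theorem exists_mem_orderExtremePoints_mem_toExposed {E : Type*} [NormedAddCommGroup E]
    [Lattice E] [NormedSpace ℝ E] [IsOrderedAddMonoid E] [PosSMulMono ℝ E] [ClosedIicTopology E]
    {A : Set E} (hconv : Convex ℝ A) (hcomp : IsCompact (toWeakSpace ℝ E '' A))
    (hne : A.Nonempty) {g : StrongDual ℝ E} (hg : Monotone g) :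
    ∃ p ∈ orderExtremePoints A, p ∈ g.toExposed A := by
  have hFcomp : IsCompact (toWeakSpace ℝ E '' g.toExposed A) :=
    hcomp.of_isClosed_subset (hcomp.isClosed.toWeakSpace_image_toExposed g)
      (image_mono (sep_subset _ _))
  obtain ⟨p, hp⟩ := exists_isUpperExtreme_singleton hFcomp (hcomp.toExposed_nonempty hne g)
  exact ⟨p, ((isUpperExtreme_toExposed hg A).trans hp).orderExtremePoints_subset hconv
    (mem_orderExtremePoints_singleton p), hp.isExtreme.subset rfl⟩

theorem statement6_general (A : Set X) (hconv : Convex ℝ A)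
    (hApos : A ⊆ {x : X | 0 ≤ x}) (hsolid : IsPosSolidSet A)
    (hcomp : IsCompact (toWeakSpace ℝ X '' A)) :
    A = closure (⋂₀ {D : Set X | orderExtremePoints A ⊆ D ∧ Convex ℝ D ∧ IsPosSolidSet D}) := by
  set B := ⋂₀ {D : Set X | orderExtremePoints A ⊆ D ∧ Convex ℝ D ∧ IsPosSolidSet D}
  have hBA : B ⊆ A := sInter_subset_of_mem ⟨fun _ hp => hp.1, hconv, hsolid⟩
  have hEB : orderExtremePoints A ⊆ B := subset_sInter fun _ hD => hD.1
  have hBconv : Convex ℝ B := convex_sInter fun _ hD => hD.2.1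
  have hKA : closure B ⊆ A :=
    closure_minimal hBA (WeakSpace.isClosed_of_isClosed hcomp.isClosed)
  have hKsolid : IsPosSolidSet (closure B) :=
    (isPosSolidSet_sInter fun _ hD => hD.2.2).closure (hBA.trans hApos)
  have hKcomp : IsCompact (toWeakSpace ℝ X '' closure B) :=
    hcomp.of_isClosed_subset (isClosed_closure.toWeakSpace_image hBconv.closure) (image_mono hKA)
  refine subset_antisymm (fun a ha => ?_) hKA
  by_contra haK
  have haK' : a ∉ (lowerClosure (closure B) : Set X) :=
    fun ⟨_, hk, hak⟩ => haK (hKsolid (hApos ha) hk hak)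
  obtain ⟨p₀, hp₀, -⟩ :=
    exists_mem_orderExtremePoints_mem_toExposed hconv hcomp ⟨a, ha⟩ (g := 0) monotone_const
  obtain ⟨g, hg, hgK⟩ := exists_monotone_strongDual_separating hBconv.closure.lowerClosure
    hKcomp.isClosed_lowerClosure_of_toWeakSpace_image
    ⟨p₀, subset_lowerClosure (subset_closure (hEB hp₀))⟩ (lowerClosure _).lower haK'
  obtain ⟨p, hpE, -, hpmax⟩ := exists_mem_orderExtremePoints_mem_toExposed hconv hcomp ⟨a, ha⟩ hg
  exact (hgK p (subset_lowerClosure (subset_closure (hEB hpE)))).not_ge (hpmax a ha)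

theorem statement6 (A : Set X) (hne : A.Nonempty) (hconv : Convex ℝ A)
    (hApos : A ⊆ {x : X | 0 ≤ x}) (hsolid : IsPosSolidSet A)
    (hcomp : IsCompact (toWeakSpace ℝ X '' A)) :
    A = closure (⋂₀ {D : Set X | orderExtremePoints A ⊆ D ∧ Convex ℝ D ∧ IsPosSolidSet D}) :=
  statement6_general A hconv hApos hsolid hcomp
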